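/- arXiv:1508.03425 — 2 statements merged into one kernel-verified Lean document; each statement's English description precedes it below -/
import Mathlib

section
/- Let c be a natural number, let w be a Gauss word of length 2c, and let j, j' : Fin (2c) be distinct positions. Then there exists an assignment x with step_j(x) ≠ step_{j'}(x), where step_b(x) = d_{b+1}(x) − d_b(x) (indices mod 2c). In other words, no two columns of the ±1 step matrix of the warping matrix are equal. -/
/-!
Moving the base from `b` to `b + 1` only affects the letter `w b`: the earlier of its two positions
switches from `b` to the other position `b'`, and exactly one of `b`, `b'` is passed under. Hence
`step_b(x) = -1` if `b` is passed under and `+1` otherwise. Two distinct positions are separated by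
an assignment passing under the first and over the second: when they carry the same letter every
assignment does this, otherwise the two letters can be set independently.
-/

namespace Warping

/-- A Gauss word of length `2c`: every letter occurs at exactly two positions. -/
def IsGaussWord (c : ℕ) (w : Fin (2*c) → Fin c) : Prop :=
  ∀ i : Fin c, (Finset.univ.filter (fun j => w j = i)).card = 2

/-- The cyclic successor of an index. -/
def next {n : ℕ} (b : Fin n) : Fin n :=
  ⟨((b : ℕ) + 1) % n, Nat.mod_lt _ (Nat.lt_of_le_of_lt (Nat.zero_le _) b.isLt)⟩

/-- `j` is the first (smaller) of the two positions of its letter. -/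
def isFirst (c : ℕ) (w : Fin (2*c) → Fin c) (j : Fin (2*c)) : Prop :=
  ∀ j' : Fin (2*c), w j' = w j → j ≤ j'

/-- Under the assignment `x`, position `j` is passed under. -/
def passedUnder (c : ℕ) (w : Fin (2*c) → Fin c) (x : Fin c → Bool) (j : Fin (2*c)) : Prop :=
  (x (w j) = true) ↔ isFirst c w j

/-- Time at which position `j` is met in the cyclic traversal starting at base `b`. -/
def time (c : ℕ) (b j : Fin (2*c)) : ℕ := ((j : ℕ) + 2*c - (b : ℕ)) % (2*c)

/-- The letter `i` is a warping crossing for assignment `x` and base `b`: the position of `i`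
met earlier in the cyclic traversal starting at `b` is passed under. -/
def IsWarpingCrossing (c : ℕ) (w : Fin (2*c) → Fin c) (x : Fin c → Bool)
    (b : Fin (2*c)) (i : Fin c) : Prop :=
  ∃ j : Fin (2*c), w j = i ∧ (∀ j' : Fin (2*c), w j' = i → time c b j ≤ time c b j') ∧
    passedUnder c w x j

open scoped Classical in
/-- The warping degree of the assignment `x` with base point `b`. -/
noncomputable def warpingDegree (c : ℕ) (w : Fin (2*c) → Fin c) (x : Fin c → Bool)
    (b : Fin (2*c)) : ℕ :=
  (Finset.univ.filter (fun i => IsWarpingCrossing c w x b i)).card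

/-- The step `d_{b+1}(x) - d_b(x)` of the warping degree sequence. -/
noncomputable def step (c : ℕ) (w : Fin (2*c) → Fin c) (x : Fin c → Bool) (b : Fin (2*c)) : ℤ :=
  (warpingDegree c w x (next b) : ℤ) - (warpingDegree c w x b : ℤ)

lemma val_next {n : ℕ} (b : Fin n) : (next b : ℕ) = if (b : ℕ) + 1 = n then 0 else (b : ℕ) + 1 := by
  have hb := b.isLt
  show ((b : ℕ) + 1) % n = _
  split_ifs with h
  · rw [h, Nat.mod_self]
  · exact Nat.mod_eq_of_lt (by omega)

lemma time_eq (c : ℕ) (b j : Fin (2*c)) :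
    time c b j = if (b : ℕ) ≤ j then (j : ℕ) - b else (j : ℕ) + 2*c - b := by
  have hb := b.isLt
  have hj := j.isLt
  unfold time
  split_ifs with h
  · rw [show (j : ℕ) + 2*c - b = (j - b) + 2*c by omega, Nat.add_mod_right]
    exact Nat.mod_eq_of_lt (by omega)
  · exact Nat.mod_eq_of_lt (by omega)

lemma time_eq_zero_iff {c : ℕ} {b j : Fin (2*c)} : time c b j = 0 ↔ j = b := by
  have hb := b.isLt
  rw [time_eq, Fin.ext_iff]
  split_ifs <;> omega

lemma time_next_add_one {c : ℕ} {b j : Fin (2*c)} (h : j ≠ b) :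
    time c (next b) j + 1 = time c b j := by
  have hb := b.isLt
  have hj := j.isLt
  rw [Ne, Fin.ext_iff] at h
  rw [time_eq, time_eq, val_next]
  split_ifs <;> omega

lemma time_next_lt_time_next_self {c : ℕ} {b j : Fin (2*c)} (h : j ≠ b) :
    time c (next b) j < time c (next b) b := by
  have hb := b.isLt
  have hj := j.isLt
  rw [Ne, Fin.ext_iff] at h
  rw [time_eq, time_eq, val_next]
  split_ifs <;> omega

def IsPartner {α β : Type*} (w : α → β) (a a' : α) : Prop :=
  a' ≠ a ∧ ∀ j, w j = w a ↔ j = a ∨ j = a'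

namespace IsPartner

variable {α β : Type*} {w : α → β} {a a' : α}

lemma map_eq (h : IsPartner w a a') : w a' = w a :=
  (h.2 a').2 (Or.inr rfl)

lemma symm (h : IsPartner w a a') : IsPartner w a' a :=
  ⟨h.1.symm, fun j => by rw [h.map_eq, h.2 j, or_comm]⟩

lemma eq_of_map_eq {j : α} (h : IsPartner w a a') (hj : w j = w a) (hja : j ≠ a) : j = a' :=
  ((h.2 j).1 hj).resolve_left hja

end IsPartner

lemma IsGaussWord.exists_partner {c : ℕ} {w : Fin (2*c) → Fin c} (hw : IsGaussWord c w)
    (b : Fin (2*c)) : ∃ b', IsPartner w b b' := by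
  obtain ⟨a, a', hne, hset⟩ := Finset.card_eq_two.mp (hw (w b))
  have hmem : ∀ j, w j = w b ↔ j = a ∨ j = a' := fun j => by
    simpa using congrArg (j ∈ ·) hset
  rcases (hmem b).1 rfl with rfl | rfl
  · exact ⟨a', hne.symm, hmem⟩
  · exact ⟨a, hne, fun j => by rw [hmem, or_comm]⟩

section Partner

variable {c : ℕ} {w : Fin (2*c) → Fin c} {b b' : Fin (2*c)}

lemma IsPartner.isFirst_iff (h : IsPartner w b b') : isFirst c w b ↔ b < b' := by
  refine ⟨fun hb => lt_of_le_of_ne (hb b' h.map_eq) h.1.symm, fun hlt j hj => ?_⟩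
  rcases (h.2 j).1 hj with rfl | rfl
  · exact le_rfl
  · exact hlt.le

lemma IsPartner.passedUnder_iff_not (h : IsPartner w b b') (x : Fin c → Bool) :
    passedUnder c w x b' ↔ ¬ passedUnder c w x b := by
  unfold passedUnder
  rw [h.symm.isFirst_iff, h.isFirst_iff, h.map_eq, ← not_le, le_iff_lt_or_eq, or_iff_left h.1.symm]
  tauto

end Partner

section Crossing

variable {c : ℕ} {w : Fin (2*c) → Fin c} (x : Fin c → Bool) {b : Fin (2*c)}

lemma isWarpingCrossing_self_iff :
    IsWarpingCrossing c w x b (w b) ↔ passedUnder c w x b := by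
  refine ⟨fun ⟨j, _, hmin, hj⟩ => ?_, fun hb => ⟨b, rfl, fun _ _ => ?_, hb⟩⟩
  · have hjb : j = b := time_eq_zero_iff.1 (Nat.le_zero.1 (time_eq_zero_iff.2 rfl ▸ hmin b rfl))
    exact hjb ▸ hj
  · rw [time_eq_zero_iff.2 rfl]
    exact Nat.zero_le _

lemma IsPartner.isWarpingCrossing_next_iff {b' : Fin (2*c)} (h : IsPartner w b b') :
    IsWarpingCrossing c w x (next b) (w b) ↔ passedUnder c w x b' := by
  have hlt := time_next_lt_time_next_self h.1
  refine ⟨fun ⟨j, hj, hmin, hpu⟩ => ?_, fun hpu => ⟨b', h.map_eq, fun j hj => ?_, hpu⟩⟩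
  · rcases (h.2 j).1 hj with rfl | rfl
    · exact absurd (hmin b' h.map_eq) (not_le.2 hlt)
    · exact hpu
  · rcases (h.2 j).1 hj with rfl | rfl
    · exact hlt.le
    · exact le_rfl

lemma isWarpingCrossing_next_iff_of_ne {i : Fin c} (hi : i ≠ w b) :
    IsWarpingCrossing c w x (next b) i ↔ IsWarpingCrossing c w x b i := by
  have hne : ∀ j, w j = i → j ≠ b := by rintro j hj rfl; exact hi hj.symm
  have hle : ∀ j j', w j = i → w j' = i →
      (time c (next b) j ≤ time c (next b) j' ↔ time c b j ≤ time c b j') := fun j j' hj hj' => by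
    rw [← time_next_add_one (hne j hj), ← time_next_add_one (hne j' hj'), Nat.add_le_add_iff_right]
  constructor <;> rintro ⟨j, hj, hmin, hpu⟩ <;>
    exact ⟨j, hj, fun j' hj' => by simpa [hle j j' hj hj'] using hmin j' hj', hpu⟩

end Crossing

open scoped Classical in
lemma step_eq {c : ℕ} {w : Fin (2*c) → Fin c} (hw : IsGaussWord c w) (x : Fin c → Bool)
    (b : Fin (2*c)) : step c w x b = if passedUnder c w x b then -1 else 1 := by
  obtain ⟨b', hb'⟩ := hw.exists_partner b
  have hsum : step c w x b = ∑ i, ((if IsWarpingCrossing c w x (next b) i then 1 else 0) -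
      (if IsWarpingCrossing c w x b i then 1 else 0) : ℤ) := by
    simp only [step, warpingDegree, Finset.card_filter, Nat.cast_sum, Nat.cast_ite, Nat.cast_one,
      Nat.cast_zero, Finset.sum_sub_distrib]
  rw [hsum, Finset.sum_eq_single (w b)
    (fun i _ hi => by rw [isWarpingCrossing_next_iff_of_ne x hi, sub_self])
    (fun h => absurd (Finset.mem_univ _) h),
    hb'.isWarpingCrossing_next_iff, isWarpingCrossing_self_iff, hb'.passedUnder_iff_not]
  split_ifs <;> norm_num

lemma exists_passedUnder_and_not_passedUnder {c : ℕ} {w : Fin (2*c) → Fin c}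
    (hw : IsGaussWord c w) {j j' : Fin (2*c)} (hjj' : j ≠ j') :
    ∃ x : Fin c → Bool, passedUnder c w x j ∧ ¬ passedUnder c w x j' := by
  classical
  let x : Fin c → Bool := fun i =>
    if i = w j then decide (isFirst c w j) else !decide (isFirst c w j')
  have hxj : passedUnder c w x j := by simp [passedUnder, x]
  refine ⟨x, hxj, ?_⟩
  by_cases h : w j' = w j
  · obtain ⟨b', hb'⟩ := hw.exists_partner j
    obtain rfl := hb'.eq_of_map_eq h hjj'.symm
    exact fun hj' => (hb'.passedUnder_iff_not x).1 hj' hxj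
  · simp [passedUnder, x, h]

/-- No two columns of the ±1 step matrix of the warping matrix are equal: distinct positions
are distinguished by the step of some assignment. -/
theorem exists_step_ne (c : ℕ) (w : Fin (2*c) → Fin c) (hw : IsGaussWord c w)
    (j j' : Fin (2*c)) (hjj' : j ≠ j') :
    ∃ x : Fin c → Bool, step c w x j ≠ step c w x j' := by
  obtain ⟨x, hj, hj'⟩ := exists_passedUnder_and_not_passedUnder hw hjj'
  refine ⟨x, ?_⟩
  rw [step_eq hw, step_eq hw, if_pos hj, if_neg hj']
  decide

end Warping
end

section
/- Let c ≥ 1 be a natural number, let w₁, w₂ be Gauss words of length 2c, and let x₀ and x₁ be assignments. Suppose the multiset of warping degree sequences of w₁ over the 2^c − 1 assignments x ≠ x₀ equals the multiset of warping degree sequences of w₂ over the 2^c − 1 assignments x ≠ x₁. Then the warping degree sequence of x₀ (for w₁) equals the warping degree sequence of x₁ (for w₂), and hence the full multisets of all 2^c warping degree sequences of w₁ and w₂ coincide. In other words, deleting one row from the warping matrix loses no information: the warping matrix M(D) of a diagram determines the warping matrix M(P) of the underlying projection together with the deleted row. -/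
namespace Warping

/-!
For a fixed base `b`, whether a letter `i` is a warping crossing depends only on `x i`, so it is
one for exactly half of the `2^c` assignments. Hence every column of the warping matrix sums to
`c * 2^(c-1)` whatever the Gauss word, and the deleted row is this column sum minus the sums of
the remaining rows.
-/

open Finset

lemma card_filter_apply_eq {ι κ : Type*} [Fintype ι] [DecidableEq ι] [Fintype κ]
    [DecidableEq κ] (i : ι) (a : κ) :
    #{f : ι → κ | f i = a} = Fintype.card κ ^ (Fintype.card ι - 1) := by
  simpa using Fintype.card_filter_piFinset_const_eq_of_mem (univ : Finset κ) i (mem_univ a)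

lemma time_injective (c : ℕ) (b : Fin (2*c)) : Function.Injective (time c b) := by
  intro j j' h
  have hb : (b : ℕ) ≤ 2*c := b.isLt.le
  rw [time, time, Nat.add_sub_assoc hb, Nat.add_sub_assoc hb] at h
  exact Fin.ext <| (Nat.ModEq.add_right_cancel' _ h).eq_of_lt_of_lt j.isLt j'.isLt

lemma IsGaussWord.surjective {c : ℕ} {w : Fin (2*c) → Fin c} (hw : IsGaussWord c w) :
    Function.Surjective w := by
  intro i
  obtain ⟨j, hj⟩ : (univ.filter fun j => w j = i).Nonempty := by
    rw [← card_pos, hw i]; norm_num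
  exact ⟨j, (mem_filter.1 hj).2⟩

lemma isWarpingCrossing_iff_passedUnder {c : ℕ} {w : Fin (2*c) → Fin c} {x : Fin c → Bool}
    {b j₀ : Fin (2*c)} (hj₀ : ∀ j, w j = w j₀ → time c b j₀ ≤ time c b j) :
    IsWarpingCrossing c w x b (w j₀) ↔ passedUnder c w x j₀ := by
  constructor
  · rintro ⟨j, hj, hj_min, hj_under⟩
    obtain rfl : j = j₀ := time_injective c b (le_antisymm (hj_min j₀ rfl) (hj₀ j hj))
    exact hj_under
  · exact fun h => ⟨j₀, rfl, hj₀, h⟩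

open scoped Classical in
lemma card_isWarpingCrossing {c : ℕ} {w : Fin (2*c) → Fin c} (hw : Function.Surjective w)
    (b : Fin (2*c)) (i : Fin c) :
    #{x : Fin c → Bool | IsWarpingCrossing c w x b i} = 2 ^ (c - 1) := by
  obtain ⟨j₀, hj₀, hj₀_min⟩ := exists_min_image (univ.filter fun j => w j = i) (time c b)
    (let ⟨j, hj⟩ := hw i; ⟨j, by simpa using hj⟩)
  rw [mem_filter] at hj₀
  obtain ⟨-, rfl⟩ := hj₀
  have hcross : ∀ x, IsWarpingCrossing c w x b (w j₀) ↔ x (w j₀) = decide (isFirst c w j₀) :=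
    fun x => (isWarpingCrossing_iff_passedUnder fun j hj => hj₀_min j (by simpa using hj)).trans
      (by rw [passedUnder]; cases x (w j₀) <;> simp)
  simp_rw [hcross]
  simpa using card_filter_apply_eq (w j₀) (decide (isFirst c w j₀))

lemma sum_warpingDegree {c : ℕ} {w : Fin (2*c) → Fin c} (hw : Function.Surjective w)
    (b : Fin (2*c)) : ∑ x, warpingDegree c w x b = c * 2 ^ (c - 1) := by
  simp only [warpingDegree, card_filter]
  rw [sum_comm]
  simp_rw [← card_filter, card_isWarpingCrossing hw b, sum_const, card_univ, Fintype.card_fin,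
    smul_eq_mul]

lemma eq_and_map_eq_of_map_erase_eq {α M : Type*} [Fintype α] [DecidableEq α]
    [AddCancelCommMonoid M] {f g : α → M} {a₀ a₁ : α} (hsum : ∑ x, f x = ∑ x, g x)
    (h : (univ.erase a₀).val.map f = (univ.erase a₁).val.map g) :
    f a₀ = g a₁ ∧ univ.val.map f = univ.val.map g := by
  have hcons : ∀ (φ : α → M) a, univ.val.map φ = φ a ::ₘ (univ.erase a).val.map φ :=
    fun φ a => by rw [erase_val, ← Multiset.map_cons, Multiset.cons_erase (mem_univ a)]
  have hrow : f a₀ = g a₁ := by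
    rw [sum_eq_multiset_sum, sum_eq_multiset_sum, hcons f a₀, hcons g a₁, h,
      Multiset.sum_cons, Multiset.sum_cons] at hsum
    exact add_right_cancel hsum
  exact ⟨hrow, by rw [hcons f a₀, hcons g a₁, h, hrow]⟩

open scoped Classical in
theorem deleted_row_recovery_general (c : ℕ) (w₁ w₂ : Fin (2*c) → Fin c)
    (h₁ : IsGaussWord c w₁) (h₂ : IsGaussWord c w₂)
    (x₀ x₁ : Fin c → Bool)
    (h : Multiset.map (fun x : Fin c → Bool => fun b => warpingDegree c w₁ x b)
          ((Finset.univ : Finset (Fin c → Bool)).erase x₀).val =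
         Multiset.map (fun x : Fin c → Bool => fun b => warpingDegree c w₂ x b)
          ((Finset.univ : Finset (Fin c → Bool)).erase x₁).val) :
    (fun b => warpingDegree c w₁ x₀ b) = (fun b => warpingDegree c w₂ x₁ b) ∧
    Multiset.map (fun x : Fin c → Bool => fun b => warpingDegree c w₁ x b)
        (Finset.univ : Finset (Fin c → Bool)).val =
      Multiset.map (fun x : Fin c → Bool => fun b => warpingDegree c w₂ x b)
        (Finset.univ : Finset (Fin c → Bool)).val := by
  refine eq_and_map_eq_of_map_erase_eq ?_ h
  funext b
  simp only [Finset.sum_apply, sum_warpingDegree h₁.surjective, sum_warpingDegree h₂.surjective]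

open scoped Classical in
/-- Deleting one row from the warping matrix loses no information: if the multisets of
warping degree sequences over all assignments except one coincide, then the deleted rows
coincide and so do the full warping matrices. -/
theorem deleted_row_recovery (c : ℕ) (hc : 1 ≤ c) (w₁ w₂ : Fin (2*c) → Fin c)
    (h₁ : IsGaussWord c w₁) (h₂ : IsGaussWord c w₂)
    (x₀ x₁ : Fin c → Bool)
    (h : Multiset.map (fun x : Fin c → Bool => fun b => warpingDegree c w₁ x b)
          ((Finset.univ : Finset (Fin c → Bool)).erase x₀).val =
         Multiset.map (fun x : Fin c → Bool => fun b => warpingDegree c w₂ x b)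
          ((Finset.univ : Finset (Fin c → Bool)).erase x₁).val) :
    (fun b => warpingDegree c w₁ x₀ b) = (fun b => warpingDegree c w₂ x₁ b) ∧
    Multiset.map (fun x : Fin c → Bool => fun b => warpingDegree c w₁ x b)
        (Finset.univ : Finset (Fin c → Bool)).val =
      Multiset.map (fun x : Fin c → Bool => fun b => warpingDegree c w₂ x b)
        (Finset.univ : Finset (Fin c → Bool)).val :=
  deleted_row_recovery_general c w₁ w₂ h₁ h₂ x₀ x₁ h

end Warping
end
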